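/- arXiv:2112.07204 — 4 statements merged into one kernel-verified Lean document; each statement's English description precedes it below -/
import Mathlib

section
/- Let G be a finite undirected graph with maximum degree Δ, and let X be a k-element vertex set with G[X] connected. Then the number of sets X' with |X'| = k, G[X'] connected, |X ∩ X'| = k − 1, and G[X ∩ X'] connected, is at most k · min{n − k, kΔ}, where n is the number of vertices of G. -/
/-!
If `X'` is a connected exchange neighbour of `X`, then `X' = (X \ {x}) ∪ {y}` for some
`x ∈ X`, and the new vertex `y` is adjacent inside `G[X']` to a vertex of `X ∩ X' ⊆ X`.
So `y` lies in the outer boundary of `X`, which has at most `n - k` elements (it avoids `X`)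
and at most `kΔ` elements (it is covered by the neighbourhoods of the `k` vertices of `X`).
There are `k` choices for `x`.
-/

open Finset

lemma Finset.exists_eq_insert_erase_of_card_sdiff_eq_one {α : Type*} [DecidableEq α]
    {s t : Finset α} (hs : #(s \ t) = 1) (ht : #(t \ s) = 1) :
    ∃ x ∈ s, ∃ y ∈ t \ s, t = insert y (s.erase x) := by
  obtain ⟨x, hx⟩ := card_eq_one.1 hs
  obtain ⟨y, hy⟩ := card_eq_one.1 ht
  have hxs : x ∈ s \ t := hx ▸ mem_singleton_self x
  have hyt : y ∈ t \ s := hy ▸ mem_singleton_self y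
  refine ⟨x, (mem_sdiff.1 hxs).1, y, hyt, ?_⟩
  ext a
  have hax : a ∈ s \ t ↔ a = x := by rw [hx, mem_singleton]
  have hay : a ∈ t \ s ↔ a = y := by rw [hy, mem_singleton]
  simp only [mem_sdiff] at hax hay
  simp only [mem_insert, mem_erase]
  tauto

namespace SimpleGraph

variable {V : Type*}

lemma Connected.exists_adj_of_induce {G : SimpleGraph V} {s : Set V}
    (h : (G.induce s).Connected) {y z : V} (hy : y ∈ s) (hz : z ∈ s) (hyz : y ≠ z) :
    ∃ w ∈ s, G.Adj y w := by
  have : Nontrivial s := ⟨⟨y, hy⟩, ⟨z, hz⟩, fun h ↦ hyz (congrArg Subtype.val h)⟩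
  obtain ⟨w, hw⟩ := h.preconnected.exists_adj_of_nontrivial ⟨y, hy⟩
  exact ⟨w, w.2, hw⟩

variable [Fintype V] [DecidableEq V] (G : SimpleGraph V) [DecidableRel G.Adj]

def outerBoundary (X : Finset V) : Finset V := X.biUnion (fun v ↦ G.neighborFinset v) \ X

variable {G}

lemma mem_outerBoundary {X : Finset V} {y : V} :
    y ∈ G.outerBoundary X ↔ (∃ x ∈ X, G.Adj x y) ∧ y ∉ X := by
  simp [outerBoundary]

lemma card_outerBoundary_le_card_sub (X : Finset V) :
    #(G.outerBoundary X) ≤ Fintype.card V - #X := by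
  rw [← card_compl]
  exact card_le_card fun y hy ↦ mem_compl.2 (mem_outerBoundary.1 hy).2

lemma card_outerBoundary_le_card_mul_maxDegree (X : Finset V) :
    #(G.outerBoundary X) ≤ #X * G.maxDegree :=
  calc #(G.outerBoundary X)
    _ ≤ #(X.biUnion fun v ↦ G.neighborFinset v) := card_le_card sdiff_subset
    _ ≤ ∑ x ∈ X, #(G.neighborFinset x) := card_biUnion_le
    _ ≤ ∑ _x ∈ X, G.maxDegree := sum_le_sum fun x _ ↦ G.degree_le_maxDegree x
    _ = #X * G.maxDegree := by rw [sum_const, smul_eq_mul]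

lemma exists_eq_insert_erase_of_induce_connected {X X' : Finset V} (hcard : #X' = #X)
    (hconn : (G.induce (X' : Set V)).Connected) (hinter : #(X ∩ X') = #X - 1)
    (hne : (X ∩ X').Nonempty) :
    ∃ x ∈ X, ∃ y ∈ G.outerBoundary X, X' = insert y (X.erase x) := by
  have hpos : 0 < #(X ∩ X') := card_pos.2 hne
  have hXX' := card_sdiff_add_card_inter X X'
  have hX'X := card_sdiff_add_card_inter X' X
  rw [inter_comm] at hX'X
  obtain ⟨x, hx, y, hy, rfl⟩ :=
    exists_eq_insert_erase_of_card_sdiff_eq_one (s := X) (t := X') (by omega) (by omega)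
  obtain ⟨hyX', hyX⟩ := mem_sdiff.1 hy
  obtain ⟨z, hz⟩ := hne
  have hzy : y ≠ z := fun h ↦ hyX (h ▸ (mem_inter.1 hz).1)
  obtain ⟨w, hw, hyw⟩ :=
    hconn.exists_adj_of_induce (mem_coe.2 hyX') (mem_coe.2 (mem_inter.1 hz).2) hzy
  have hwX : w ∈ X := by
    rcases mem_insert.1 (mem_coe.1 hw) with rfl | hw'
    · exact (G.irrefl hyw).elim
    · exact mem_of_mem_erase hw'
  exact ⟨x, hx, y, mem_outerBoundary.2 ⟨⟨w, hwX, hyw.symm⟩, hyX⟩, rfl⟩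

end SimpleGraph

theorem stmt_7_general {V : Type*} [Fintype V] [DecidableEq V] (G : SimpleGraph V)
    [DecidableRel G.Adj] (k : ℕ) (X : Finset V) (hXcard : X.card = k) :
    {X' : Finset V | X'.card = k ∧ (G.induce (X' : Set V)).Connected ∧
        (X ∩ X').card = k - 1 ∧
        (G.induce ((X ∩ X' : Finset V) : Set V)).Connected}.ncard ≤
      k * min (Fintype.card V - k) (k * G.maxDegree) := by
  subst hXcard
  set exchanges := (X ×ˢ G.outerBoundary X).image fun p ↦ insert p.2 (X.erase p.1)
  have hsub : {X' : Finset V | #X' = #X ∧ (G.induce (X' : Set V)).Connected ∧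
      #(X ∩ X') = #X - 1 ∧ (G.induce ((X ∩ X' : Finset V) : Set V)).Connected} ⊆
      (exchanges : Set (Finset V)) := by
    rintro X' ⟨hcard, hconn, hinter, hinterconn⟩
    obtain ⟨x, hx, y, hy, rfl⟩ :=
      SimpleGraph.exists_eq_insert_erase_of_induce_connected hcard hconn hinter
        ⟨_, mem_coe.1 hinterconn.nonempty.some.2⟩
    exact mem_coe.2 (mem_image.2 ⟨(x, y), mem_product.2 ⟨hx, hy⟩, rfl⟩)
  calc _ ≤ #exchanges := (Set.ncard_le_ncard hsub exchanges.finite_toSet).trans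
        (Set.ncard_coe_finset _).le
    _ ≤ #X * #(G.outerBoundary X) := card_image_le.trans (card_product _ _).le
    _ ≤ _ := Nat.mul_le_mul_left _ (le_min (SimpleGraph.card_outerBoundary_le_card_sub X)
        (SimpleGraph.card_outerBoundary_le_card_mul_maxDegree X))

theorem stmt_7 {V : Type*} [Fintype V] [DecidableEq V] (G : SimpleGraph V)
    [DecidableRel G.Adj] (k : ℕ) (X : Finset V) (hXcard : X.card = k)
    (hX : (G.induce (X : Set V)).Connected) :
    {X' : Finset V | X'.card = k ∧ (G.induce (X' : Set V)).Connected ∧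
        (X ∩ X').card = k - 1 ∧
        (G.induce ((X ∩ X' : Finset V) : Set V)).Connected}.ncard ≤
      k * min (Fintype.card V - k) (k * G.maxDegree) :=
  stmt_7_general G k X hXcard
end

section
/- Let G be a finite undirected connected graph on n vertices and let X, Y be disjoint k-element vertex sets with G[X] and G[Y] connected. Then the distance d(X, Y) = min{d(x, y) : x ∈ X, y ∈ Y} satisfies d(X, Y) ≤ n − 2k + 1. -/
/-!
Take `x ∈ X`, `y ∈ Y` at minimal distance and a shortest path `p` between them. A vertex of `X`
other than `x` on `p` would be strictly closer to `y`, and symmetrically for `Y`, so `p` meets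
`X ∪ Y` only in its two ends. Its `d(x, y) + 1` vertices together with the `2k` vertices of
`X ∪ Y` thus count at least `d(x, y) + 2k - 1` distinct vertices.
-/

namespace SimpleGraph

variable {V : Type*} {G : SimpleGraph V} {u v w : V}

lemma Walk.dist_lt_length_of_mem_support_of_ne_left (p : G.Walk u w) (hv : v ∈ p.support)
    (hvu : v ≠ u) : G.dist v w < p.length := by
  classical
  exact (dist_le _).trans_lt (length_dropUntil_lt_length hv hvu)

lemma Walk.dist_lt_length_of_mem_support_of_ne_right (p : G.Walk u w) (hv : v ∈ p.support)
    (hvw : v ≠ w) : G.dist u v < p.length := by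
  classical
  exact (dist_le _).trans_lt (length_takeUntil_lt_length hv hvw)

lemma Walk.IsPath.length_add_card_add_card_le [Fintype V] {X Y : Finset V} {p : G.Walk u w}
    (hp : p.IsPath) (hXY : Disjoint X Y) (hX : ∀ v ∈ p.support, v ∈ X → v = u)
    (hY : ∀ v ∈ p.support, v ∈ Y → v = w) :
    p.length + X.card + Y.card ≤ Fintype.card V + 1 := by
  classical
  set S := p.support.toFinset
  have hS : S.card = p.length + 1 := by
    rw [List.toFinset_card_of_nodup hp.support_nodup, length_support]
  have hends : S ∩ (X ∪ Y) ⊆ {u, w} := by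
    intro v hv
    simp only [Finset.mem_inter, Finset.mem_union, List.mem_toFinset, S] at hv
    rcases hv with ⟨hvp, hvX | hvY⟩
    · simp [hX v hvp hvX]
    · simp [hY v hvp hvY]
  have hinter : (S ∩ (X ∪ Y)).card ≤ 2 :=
    (Finset.card_le_card hends).trans Finset.card_le_two
  have hunion := Finset.card_union_add_card_inter S (X ∪ Y)
  rw [Finset.card_union_of_disjoint hXY] at hunion
  have huniv := Finset.card_le_univ (S ∪ (X ∪ Y))
  omega

lemma exists_dist_add_card_add_card_le [Fintype V] {X Y : Finset V} (hXY : Disjoint X Y)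
    (hX : X.Nonempty) (hY : Y.Nonempty) :
    ∃ x ∈ X, ∃ y ∈ Y, G.dist x y + X.card + Y.card ≤ Fintype.card V + 1 := by
  classical
  obtain ⟨⟨x, y⟩, hxy, hmin⟩ :=
    (X ×ˢ Y).exists_min_image (fun q ↦ G.dist q.1 q.2) (hX.product hY)
  obtain ⟨hx, hy⟩ := Finset.mem_product.mp hxy
  refine ⟨x, hx, y, hy, ?_⟩
  by_cases hreach : G.Reachable x y
  swap
  · have hcard := Finset.card_le_univ (X ∪ Y)
    rw [Finset.card_union_of_disjoint hXY] at hcard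
    rw [dist_eq_zero_of_not_reachable hreach]
    omega
  obtain ⟨p, hp, hlen⟩ := hreach.exists_path_of_dist
  rw [← hlen]
  refine hp.length_add_card_add_card_le hXY (fun v hv hvX ↦ ?_) (fun v hv hvY ↦ ?_)
  · by_contra hvx
    have : G.dist x y ≤ G.dist v y := hmin (v, y) (Finset.mem_product.mpr ⟨hvX, hy⟩)
    have := p.dist_lt_length_of_mem_support_of_ne_left hv hvx
    omega
  · by_contra hvy
    have : G.dist x y ≤ G.dist x v := hmin (x, v) (Finset.mem_product.mpr ⟨hx, hvY⟩)
    have := p.dist_lt_length_of_mem_support_of_ne_right hv hvy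
    omega

end SimpleGraph

theorem stmt_11_general {V : Type*} [Fintype V] (G : SimpleGraph V)
    (k : ℕ) (X Y : Finset V) (hdisj : Disjoint X Y)
    (hXcard : X.card = k) (hYcard : Y.card = k)
    (hX : (G.induce (X : Set V)).Connected) :
    ∃ x ∈ X, ∃ y ∈ Y, G.dist x y ≤ Fintype.card V - 2 * k + 1 := by
  obtain ⟨⟨x₀, hx₀⟩⟩ := hX.nonempty
  have hXne : X.Nonempty := ⟨x₀, hx₀⟩
  have hYne : Y.Nonempty := by
    rw [← Finset.card_pos, hYcard, ← hXcard]
    exact hXne.card_pos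
  obtain ⟨x, hx, y, hy, hle⟩ := G.exists_dist_add_card_add_card_le hdisj hXne hYne
  exact ⟨x, hx, y, hy, by omega⟩

theorem stmt_11 {V : Type*} [Fintype V] [DecidableEq V] (G : SimpleGraph V)
    (hG : G.Connected) (k : ℕ) (X Y : Finset V) (hdisj : Disjoint X Y)
    (hXcard : X.card = k) (hYcard : Y.card = k)
    (hX : (G.induce (X : Set V)).Connected) (hY : (G.induce (Y : Set V)).Connected) :
    ∃ x ∈ X, ∃ y ∈ Y, G.dist x y ≤ Fintype.card V - 2 * k + 1 :=
  stmt_11_general G k X Y hdisj hXcard hYcard hX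
end

section
/- Let G be a finite undirected graph with maximum degree Δ ≥ 2 on n vertices. The number of k-element vertex subsets X with G[X] connected is at most n · (eΔ)^k / ((Δ − 1) · k). -/
/-!
Fix a vertex `v` and weight each vertex set `W ∋ v` by `(Δ - 1) ^ #Wᶜ`; the total weight is
`Δ ^ (n - 1)`, i.e. `W` is random with every other vertex kept with probability `1 / Δ`. With `∂S`
the vertex boundary, a connected `k`-set `S ∋ v` is the component of `v` in `G[W]` exactly when
`S ⊆ W ⊆ (∂S)ᶜ`, an event of probability `Δ ^ (1 - k) * ((Δ - 1) / Δ) ^ #∂S`. These events are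
disjoint and `#∂S ≤ k (Δ - 1) + 1`, so at most
`Δ ^ (k - 1) * (Δ / (Δ - 1)) ^ (k (Δ - 1) + 1) ≤ (e Δ) ^ k / (Δ - 1)` connected `k`-sets contain `v`.
Summing over `v` counts every connected `k`-set `k` times.
-/

open Finset

theorem Finset.sum_Icc_pow_card_compl {α R : Type*} [Fintype α] [DecidableEq α] [CommSemiring R]
    {s t : Finset α} (hst : s ⊆ t) (a : R) :
    ∑ u ∈ Icc s t, a ^ #uᶜ = a ^ #tᶜ * (a + 1) ^ #(t \ s) := by
  have hinj : Set.InjOn (s ∪ ·) (t \ s).powerset := by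
    intro u hu w hw huw
    have hu : Disjoint s u := disjoint_of_subset_right (mem_powerset.1 hu) disjoint_sdiff
    have hw : Disjoint s w := disjoint_of_subset_right (mem_powerset.1 hw) disjoint_sdiff
    simpa [union_sdiff_cancel_left hu, union_sdiff_cancel_left hw] using congrArg (· \ s) huw
  have hcompl : ∀ u ∈ (t \ s).powerset, #(s ∪ u)ᶜ = #tᶜ + (#(t \ s) - #u) := by
    intro u hu
    have hu := mem_powerset.1 hu
    rw [← card_sdiff_of_subset hu, ← card_union_of_disjoint (disjoint_compl_left.mono_right
      (sdiff_subset.trans sdiff_subset))]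
    congr 1
    ext x
    have := @hu x
    have := @hst x
    simp only [mem_compl, mem_union, mem_sdiff] at *
    tauto
  rw [Icc_eq_image_powerset hst, sum_image hinj, add_comm a, ← sum_pow_mul_eq_add_pow, mul_sum]
  refine sum_congr rfl fun u hu => ?_
  rw [hcompl u hu, pow_add, one_pow, one_mul]

namespace SimpleGraph

variable {V : Type*} [Fintype V] [DecidableEq V] (G : SimpleGraph V) [DecidableRel G.Adj]

def vertexBoundary (S : Finset V) : Finset V := S.biUnion (fun u => G.neighborFinset u) \ S

variable {G}

theorem mem_vertexBoundary {S : Finset V} {x : V} :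
    x ∈ G.vertexBoundary S ↔ x ∉ S ∧ ∃ u ∈ S, G.Adj u x := by
  simp [vertexBoundary, and_comm]

theorem disjoint_vertexBoundary (S : Finset V) : Disjoint S (G.vertexBoundary S) := disjoint_sdiff

theorem subset_compl_vertexBoundary (S : Finset V) : S ⊆ (G.vertexBoundary S)ᶜ :=
  subset_compl_iff_disjoint_right.2 (disjoint_vertexBoundary S)

theorem subset_of_disjoint_vertexBoundary {S T : Finset V}
    (hS : (G.induce (S : Set V)).Preconnected) {v : V} (hvS : v ∈ S) (hvT : v ∈ T)
    (hST : Disjoint S (G.vertexBoundary T)) : S ⊆ T := by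
  intro x hx
  obtain ⟨p⟩ := hS ⟨v, hvS⟩ ⟨x, hx⟩
  suffices ∀ {a b : (S : Set V)}, (G.induce (S : Set V)).Walk a b → (a : V) ∈ T → (b : V) ∈ T from
    this p hvT
  intro a b p
  induction p with
  | nil => exact id
  | cons hab _ ih =>
    refine fun ha => ih (by_contra fun hb => ?_)
    exact Finset.disjoint_left.1 hST (mem_coe.1 (Subtype.prop _))
      (mem_vertexBoundary.2 ⟨hb, _, ha, hab⟩)

theorem card_vertexBoundary_le {S : Finset V} (hS : (G.induce (S : Set V)).Connected) :
    #(G.vertexBoundary S) ≤ #S * (G.maxDegree - 1) + 1 := by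
  obtain ⟨⟨v, hv⟩⟩ := hS.nonempty
  have hout : ∀ u, #(G.neighborFinset u \ S) ≤ G.maxDegree := fun u =>
    (card_le_card sdiff_subset).trans
      ((G.card_neighborFinset_eq_degree u).trans_le (G.degree_le_maxDegree u))
  have hout' : ∀ u ∈ S.erase v, #(G.neighborFinset u \ S) ≤ G.maxDegree - 1 := by
    intro u hu
    obtain ⟨hne, huS⟩ := mem_erase.1 hu
    obtain ⟨p⟩ := hS.preconnected ⟨u, huS⟩ ⟨v, hv⟩
    have hadj : G.Adj u p.snd := p.adj_snd (Walk.not_nil_of_ne (by simpa using hne))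
    have hinter : 0 < #(G.neighborFinset u ∩ S) :=
      card_pos.2 ⟨p.snd, mem_inter.2 ⟨by simpa using hadj, p.snd.2⟩⟩
    have := card_sdiff_add_card_inter (G.neighborFinset u) S
    have := G.card_neighborFinset_eq_degree u
    have := G.degree_le_maxDegree u
    omega
  calc #(G.vertexBoundary S) ≤ #(S.biUnion fun u => G.neighborFinset u \ S) := by
        refine card_le_card fun x hx => ?_
        obtain ⟨hxS, u, hu, hux⟩ := mem_vertexBoundary.1 hx
        exact mem_biUnion.2 ⟨u, hu, mem_sdiff.2 ⟨by simpa using hux, hxS⟩⟩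
    _ ≤ ∑ u ∈ S, #(G.neighborFinset u \ S) := card_biUnion_le
    _ = #(G.neighborFinset v \ S) + ∑ u ∈ S.erase v, #(G.neighborFinset u \ S) :=
        (add_sum_erase _ _ hv).symm
    _ ≤ G.maxDegree + #(S.erase v) * (G.maxDegree - 1) :=
        add_le_add (hout v) (sum_le_card_nsmul _ _ _ hout')
    _ ≤ #S * (G.maxDegree - 1) + 1 := by
        obtain ⟨m, hm⟩ := Nat.exists_eq_add_of_lt (card_pos.2 ⟨v, hv⟩)
        rw [card_erase_of_mem hv, hm, Nat.add_sub_cancel, zero_add, add_mul, one_mul]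
        omega

theorem sum_pow_card_vertexBoundary_le (d : ℕ) (v : V) (𝒞 : Finset (Finset V))
    (h𝒞 : ∀ S ∈ 𝒞, v ∈ S ∧ (G.induce (S : Set V)).Connected) :
    ∑ S ∈ 𝒞, d ^ #(G.vertexBoundary S) * (d + 1) ^ #((G.vertexBoundary S)ᶜ \ S)
      ≤ (d + 1) ^ (Fintype.card V - 1) := by
  have hdisj : (𝒞 : Set (Finset V)).PairwiseDisjoint fun S => Icc S (G.vertexBoundary S)ᶜ := by
    intro S hS T hT hne
    refine Finset.disjoint_left.2 fun W hWS hWT => hne ?_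
    rw [mem_Icc] at hWS hWT
    obtain ⟨hvS, hS⟩ := h𝒞 S hS
    obtain ⟨hvT, hT⟩ := h𝒞 T hT
    exact (subset_of_disjoint_vertexBoundary hS.preconnected hvS hvT
      (subset_compl_iff_disjoint_right.1 (hWS.1.trans hWT.2))).antisymm
      (subset_of_disjoint_vertexBoundary hT.preconnected hvT hvS
        (subset_compl_iff_disjoint_right.1 (hWT.1.trans hWS.2)))
  have hsub : 𝒞.biUnion (fun S => Icc S (G.vertexBoundary S)ᶜ) ⊆ Icc {v} univ := by
    intro W hW
    obtain ⟨S, hS, hW⟩ := mem_biUnion.1 hW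
    exact mem_Icc.2 ⟨singleton_subset_iff.2 ((mem_Icc.1 hW).1 (h𝒞 S hS).1), subset_univ W⟩
  calc ∑ S ∈ 𝒞, d ^ #(G.vertexBoundary S) * (d + 1) ^ #((G.vertexBoundary S)ᶜ \ S)
      = ∑ S ∈ 𝒞, ∑ W ∈ Icc S (G.vertexBoundary S)ᶜ, d ^ #Wᶜ := by
        refine sum_congr rfl fun S _ => ?_
        rw [sum_Icc_pow_card_compl (subset_compl_vertexBoundary S), compl_compl]
    _ = ∑ W ∈ 𝒞.biUnion (fun S => Icc S (G.vertexBoundary S)ᶜ), d ^ #Wᶜ :=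
        (sum_biUnion hdisj).symm
    _ ≤ ∑ W ∈ Icc {v} univ, d ^ #Wᶜ := sum_le_sum_of_subset hsub
    _ = (d + 1) ^ (Fintype.card V - 1) := by
        rw [sum_Icc_pow_card_compl (subset_univ _), compl_univ, card_empty, pow_zero, one_mul,
          card_univ_sdiff, card_singleton]

theorem pow_mul_pow_le_of_connected {d : ℕ} (hd : G.maxDegree = d + 1) {S : Finset V}
    (hS : (G.induce (S : Set V)).Connected) :
    d ^ (#S * d + 1) * (d + 1) ^ (Fintype.card V - #S) ≤
      d ^ #(G.vertexBoundary S) * (d + 1) ^ #((G.vertexBoundary S)ᶜ \ S) *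
        (d + 1) ^ (#S * d + 1) := by
  set B := #(G.vertexBoundary S)
  have hcompl : #((G.vertexBoundary S)ᶜ \ S) = Fintype.card V - #S - B := by
    rw [card_sdiff_of_subset (subset_compl_vertexBoundary S), card_compl]
    omega
  have hBn : B ≤ Fintype.card V - #S := by
    have := card_le_univ (S ∪ G.vertexBoundary S)
    rw [card_union_of_disjoint (disjoint_vertexBoundary S)] at this
    omega
  have hB : B ≤ #S * d + 1 := by
    simpa only [hd, Nat.add_sub_cancel] using card_vertexBoundary_le hS
  obtain ⟨a, ha⟩ := Nat.exists_eq_add_of_le hB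
  obtain ⟨b, hb⟩ := Nat.exists_eq_add_of_le hBn
  rw [hcompl, ha, hb, Nat.add_sub_cancel_left]
  calc d ^ (B + a) * (d + 1) ^ (B + b) = d ^ B * (d + 1) ^ b * (d ^ a * (d + 1) ^ B) := by ring
    _ ≤ d ^ B * (d + 1) ^ b * ((d + 1) ^ a * (d + 1) ^ B) := by gcongr; omega
    _ = d ^ B * (d + 1) ^ b * (d + 1) ^ (B + a) := by ring

theorem card_connected_mem_mul_le (hΔ : 0 < G.maxDegree) (v : V) (k : ℕ) :
    #{S : Finset V | #S = k ∧ v ∈ S ∧ (G.induce (S : Set V)).Connected} *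
      (G.maxDegree - 1) ^ (k * (G.maxDegree - 1) + 1) ≤ G.maxDegree ^ (k * G.maxDegree) := by
  set 𝒞 := ({S : Finset V | #S = k ∧ v ∈ S ∧ (G.induce (S : Set V)).Connected} : Finset _)
  set n := Fintype.card V
  obtain ⟨d, hd⟩ : ∃ d, G.maxDegree = d + 1 := ⟨_, (Nat.succ_pred_eq_of_pos hΔ).symm⟩
  rw [hd, Nat.add_sub_cancel]
  rcases 𝒞.eq_empty_or_nonempty with h𝒞 | ⟨S₀, hS₀⟩
  · simp [h𝒞]
  have hk : 0 < k ∧ k ≤ n := by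
    obtain ⟨hcard, hv, -⟩ := (mem_filter.1 hS₀).2
    exact ⟨hcard ▸ card_pos.2 ⟨v, hv⟩, hcard ▸ card_le_univ S₀⟩
  have hweight := sum_pow_card_vertexBoundary_le d v 𝒞 fun S hS => (mem_filter.1 hS).2.2
  refine Nat.le_of_mul_le_mul_right (c := (d + 1) ^ (n - k)) ?_ (by positivity)
  calc #𝒞 * d ^ (k * d + 1) * (d + 1) ^ (n - k)
      = ∑ S ∈ 𝒞, d ^ (k * d + 1) * (d + 1) ^ (n - k) := by
        rw [sum_const, smul_eq_mul, mul_assoc]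
    _ ≤ ∑ S ∈ 𝒞, d ^ #(G.vertexBoundary S) * (d + 1) ^ #((G.vertexBoundary S)ᶜ \ S) *
          (d + 1) ^ (k * d + 1) := by
        refine sum_le_sum fun S hS => ?_
        obtain ⟨rfl, -, hconn⟩ := (mem_filter.1 hS).2
        exact pow_mul_pow_le_of_connected hd hconn
    _ ≤ (d + 1) ^ (n - 1) * (d + 1) ^ (k * d + 1) := by
        rw [← sum_mul]
        exact Nat.mul_le_mul_right _ hweight
    _ = (d + 1) ^ (k * (d + 1)) * (d + 1) ^ (n - k) := by
        rw [← pow_add, ← pow_add, mul_add_one]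
        congr 1
        omega

theorem card_connected_mul_le (hΔ : 1 < G.maxDegree) (k : ℕ) :
    #{X : Finset V | #X = k ∧ (G.induce (X : Set V)).Connected} * k ≤ Fintype.card V *
      (G.maxDegree ^ (k * G.maxDegree) / (G.maxDegree - 1) ^ (k * (G.maxDegree - 1) + 1)) := by
  rw [← sum_const_nat fun S hS => (mem_filter.1 hS).2.1]
  have hpos : 0 < G.maxDegree - 1 := Nat.sub_pos_of_lt hΔ
  refine sum_card_le fun v => (Nat.le_div_iff_mul_le (by positivity)).2 ?_
  refine le_trans ?_ (G.card_connected_mem_mul_le (by omega) v k)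
  gcongr
  intro S
  simp only [mem_filter, mem_univ, true_and]
  tauto

end SimpleGraph

theorem natCast_pow_div_pow_mul_le_exp_mul_pow (d k : ℕ) :
    (((d + 1) ^ (k * (d + 1)) / d ^ (k * d + 1) : ℕ) : ℝ) * d ≤ (Real.exp 1 * (d + 1)) ^ k := by
  rcases d.eq_zero_or_pos with rfl | hd
  · simp [Real.exp_pos, le_of_lt]
  have hd : (0 : ℝ) < d := by exact_mod_cast hd
  have hexp : ((d + 1 : ℝ) / d) ^ d ≤ Real.exp 1 := by
    convert Real.one_add_inv_pow_le_exp (n := d) using 2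
    field_simp
  calc (((d + 1) ^ (k * (d + 1)) / d ^ (k * d + 1) : ℕ) : ℝ) * d
      ≤ (d + 1 : ℝ) ^ (k * (d + 1)) / d ^ (k * d + 1) * d := by
        gcongr
        exact_mod_cast Nat.cast_div_le
    _ = (((d + 1 : ℝ) / d) ^ d) ^ k * (d + 1) ^ k := by
        rw [div_pow, div_pow, ← pow_mul, ← pow_mul]
        field_simp
        ring
    _ ≤ Real.exp 1 ^ k * (d + 1) ^ k := by gcongr
    _ = (Real.exp 1 * (d + 1)) ^ k := by rw [mul_pow]

theorem stmt_13 {V : Type*} [Fintype V] [DecidableEq V] (G : SimpleGraph V)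
    [DecidableRel G.Adj] (hΔ : 2 ≤ G.maxDegree) (k : ℕ) :
    ({X : Finset V | X.card = k ∧ (G.induce (X : Set V)).Connected}.ncard : ℝ) ≤
      (Fintype.card V : ℝ) * (Real.exp 1 * G.maxDegree) ^ k /
        (((G.maxDegree : ℝ) - 1) * k) := by
  rw [show {X : Finset V | X.card = k ∧ (G.induce (X : Set V)).Connected}.ncard =
      #{X : Finset V | #X = k ∧ (G.induce (X : Set V)).Connected} by simp [← Set.ncard_coe_finset]]
  rcases k.eq_zero_or_pos with rfl | hk
  -- for `k = 0` the right-hand side is a division by zero, and the empty graph is not connected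
  · simpa using fun hc : (G.induce ((∅ : Finset V) : Set V)).Connected => by
      simpa using hc.nonempty
  obtain ⟨d, hd⟩ : ∃ d, G.maxDegree = d + 1 := ⟨G.maxDegree - 1, by omega⟩
  have hd0 : 0 < d := by omega
  have hcount := G.card_connected_mul_le (by omega) k
  rw [hd, Nat.add_sub_cancel] at hcount
  rw [hd, Nat.cast_succ, add_sub_cancel_right, le_div_iff₀ (by positivity)]
  calc _ = ((#{X : Finset V | #X = k ∧ (G.induce (X : Set V)).Connected} * k : ℕ) : ℝ) * d := by
        push_cast; ring
    _ ≤ Fintype.card V * (((d + 1) ^ (k * (d + 1)) / d ^ (k * d + 1) : ℕ) * d) := by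
        rw [← mul_assoc]; gcongr; exact_mod_cast hcount
    _ ≤ Fintype.card V * (Real.exp 1 * (d + 1)) ^ k := by
        gcongr; exact natCast_pow_div_pow_mul_le_exp_mul_pow d k
end

section
/- Let G be a finite undirected graph and X a k-element vertex set with G[X] connected, k ≥ 2. Let u ∈ X be a vertex that is not a cut vertex of G[X], and let w ∉ X be a vertex adjacent in G to some vertex of X \ {u}. Then X' = (X \ {u}) ∪ {w} has size k, G[X'] is connected, and G[X ∩ X'] is connected. -/
namespace Finset

variable {α : Type*} [DecidableEq α]

theorem card_insert_erase_of_mem_of_notMem {s : Finset α} {u w : α} (hu : u ∈ s) (hw : w ∉ s) :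
    (insert w (s.erase u)).card = s.card := by
  rw [card_insert_of_notMem fun h => hw (mem_of_mem_erase h), card_erase_add_one hu]

theorem inter_insert_erase_of_notMem {s : Finset α} {u w : α} (hw : w ∉ s) :
    s ∩ insert w (s.erase u) = s.erase u := by
  rw [inter_insert_of_notMem hw, inter_erase, inter_self]

end Finset

namespace SimpleGraph

theorem Connected.induce_insert {V : Type*} {G : SimpleGraph V} {s : Set V} {x w : V}
    (hs : (G.induce s).Connected) (hx : x ∈ s) (hxw : G.Adj x w) :
    (G.induce (insert w s)).Connected := by
  have hunion := induce_union_connected hs.preconnected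
    (induce_pair_connected_of_adj hxw).preconnected ⟨x, hx, Set.mem_insert x {w}⟩
  rwa [Set.union_insert, Set.insert_eq_of_mem (Set.mem_union_left _ hx), Set.union_singleton]
    at hunion

end SimpleGraph

theorem stmt_16_general {V : Type*} [DecidableEq V] (G : SimpleGraph V)
    (k : ℕ) (X : Finset V) (hXcard : X.card = k)
    (u : V) (hu : u ∈ X) (hucut : (G.induce ((X.erase u : Finset V) : Set V)).Connected)
    (w : V) (hwX : w ∉ X) (hwadj : ∃ x ∈ X.erase u, G.Adj x w) :
    (insert w (X.erase u)).card = k ∧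
      (G.induce ((insert w (X.erase u) : Finset V) : Set V)).Connected ∧
      (G.induce ((X ∩ insert w (X.erase u) : Finset V) : Set V)).Connected := by
  obtain ⟨x, hx, hxw⟩ := hwadj
  refine ⟨hXcard ▸ Finset.card_insert_erase_of_mem_of_notMem hu hwX, ?_, ?_⟩
  · rw [Finset.coe_insert]
    exact hucut.induce_insert (Finset.mem_coe.mpr hx) hxw
  · rwa [Finset.inter_insert_erase_of_notMem hwX]

theorem stmt_16 {V : Type*} [Fintype V] [DecidableEq V] (G : SimpleGraph V)
    (k : ℕ) (hk : 2 ≤ k) (X : Finset V) (hXcard : X.card = k)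
    (hX : (G.induce (X : Set V)).Connected)
    (u : V) (hu : u ∈ X) (hucut : (G.induce ((X.erase u : Finset V) : Set V)).Connected)
    (w : V) (hwX : w ∉ X) (hwadj : ∃ x ∈ X.erase u, G.Adj x w) :
    (insert w (X.erase u)).card = k ∧
      (G.induce ((insert w (X.erase u) : Finset V) : Set V)).Connected ∧
      (G.induce ((X ∩ insert w (X.erase u) : Finset V) : Set V)).Connected :=
  stmt_16_general G k X hXcard u hu hucut w hwX hwadj
end
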